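/- Let R, S be k-algebras with twisting map τ, and suppose ψ_R : C_• → C'_• and ψ_S : D_• → D'_• are chain maps of bimodule resolutions of R and S respectively, each compatible with τ (i.e., (ψ_R ⊗ 1_S)τ_C = τ_{C'}(1_S ⊗ ψ_R) and (1_R ⊗ ψ_S)τ_D = τ_{D'}(ψ_S ⊗ 1_R)). Then ψ_R ⊗ ψ_S : C_• ⊗_τ D_• → C'_• ⊗_τ D'_• is a chain map of (R ⊗_τ S)-bimodule resolutions of R ⊗_τ S. -/
import Mathlib


open TensorProduct LinearMap

variable (k : Type) [Field k]

section TwistingDefs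

variable (R S : Type) [Ring R] [Ring S] [Algebra k R] [Algebra k S]

/-- The right-hand side of the twisting-map compatibility condition. -/
noncomputable def twistRHS (τ : S ⊗[k] R →ₗ[k] R ⊗[k] S) :
    (S ⊗[k] S) ⊗[k] (R ⊗[k] R) →ₗ[k] R ⊗[k] S :=
  TensorProduct.map (LinearMap.mul' k R) (LinearMap.mul' k S)
    ∘ₗ (TensorProduct.assoc k R R (S ⊗[k] S)).symm.toLinearMap
    ∘ₗ lTensor R (TensorProduct.assoc k R S S).toLinearMap
    ∘ₗ lTensor R (rTensor S τ)
    ∘ₗ lTensor R (TensorProduct.assoc k S R S).symm.toLinearMap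
    ∘ₗ (TensorProduct.assoc k R S (R ⊗[k] S)).toLinearMap
    ∘ₗ TensorProduct.map τ τ
    ∘ₗ (TensorProduct.assoc k S R (S ⊗[k] R)).symm.toLinearMap
    ∘ₗ lTensor S (TensorProduct.assoc k R S R).toLinearMap
    ∘ₗ lTensor S (rTensor R τ)
    ∘ₗ lTensor S (TensorProduct.assoc k S R R).symm.toLinearMap
    ∘ₗ (TensorProduct.assoc k S S (R ⊗[k] R)).toLinearMap

/-- `τ : S ⊗ R → R ⊗ S` is a twisting map. -/
noncomputable def IsTwistingMap (τ : S ⊗[k] R →ₗ[k] R ⊗[k] S) : Prop :=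
  Function.Bijective τ ∧
  (∀ r : R, τ ((1 : S) ⊗ₜ[k] r) = r ⊗ₜ[k] (1 : S)) ∧
  (∀ s : S, τ (s ⊗ₜ[k] (1 : R)) = (1 : R) ⊗ₜ[k] s) ∧
  τ ∘ₗ TensorProduct.map (LinearMap.mul' k S) (LinearMap.mul' k R) = twistRHS k R S τ

variable (τ : S ⊗[k] R →ₗ[k] R ⊗[k] S)

/-- The `(R ⊗_τ S)`-bimodule action `(ρ_C ⊗ ρ_D)(1 ⊗ 1 ⊗ τ ⊗ 1 ⊗ 1)(1 ⊗ τ_C ⊗ τ_D ⊗ 1)`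
on `C ⊗ D`, as a linear map `(R ⊗ S) ⊗ ((C ⊗ D) ⊗ (R ⊗ S)) → C ⊗ D`. -/
noncomputable def twistAction (C D : Type) [AddCommGroup C] [Module k C]
    [AddCommGroup D] [Module k D]
    (ρC : (R ⊗[k] C) ⊗[k] R →ₗ[k] C) (ρD : (S ⊗[k] D) ⊗[k] S →ₗ[k] D)
    (τC : S ⊗[k] C →ₗ[k] C ⊗[k] S) (τD : D ⊗[k] R →ₗ[k] R ⊗[k] D) :
    (R ⊗[k] S) ⊗[k] ((C ⊗[k] D) ⊗[k] (R ⊗[k] S)) →ₗ[k] C ⊗[k] D :=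
  TensorProduct.map ρC ρD
    -- reassociate `((R⊗C)⊗(R⊗S))⊗(D⊗S)` into `((R⊗C)⊗R)⊗((S⊗D)⊗S)`
    ∘ₗ (TensorProduct.assoc k (R ⊗[k] C) R ((S ⊗[k] D) ⊗[k] S)).symm.toLinearMap
    ∘ₗ lTensor (R ⊗[k] C) (lTensor R (TensorProduct.assoc k S D S).symm.toLinearMap)
    ∘ₗ lTensor (R ⊗[k] C) (TensorProduct.assoc k R S (D ⊗[k] S)).toLinearMap
    ∘ₗ (TensorProduct.assoc k (R ⊗[k] C) (R ⊗[k] S) (D ⊗[k] S)).toLinearMap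
    -- apply `τ` in the middle
    ∘ₗ rTensor (D ⊗[k] S) (lTensor (R ⊗[k] C) τ)
    -- reassociate `(R⊗(C⊗S))⊗((R⊗D)⊗S)` into `((R⊗C)⊗(S⊗R))⊗(D⊗S)`
    ∘ₗ (TensorProduct.assoc k (R ⊗[k] C) (S ⊗[k] R) (D ⊗[k] S)).symm.toLinearMap
    ∘ₗ lTensor (R ⊗[k] C) (TensorProduct.assoc k S R (D ⊗[k] S)).symm.toLinearMap
    ∘ₗ lTensor (R ⊗[k] C) (lTensor S (TensorProduct.assoc k R D S).toLinearMap)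
    ∘ₗ (TensorProduct.assoc k (R ⊗[k] C) S ((R ⊗[k] D) ⊗[k] S)).toLinearMap
    ∘ₗ rTensor ((R ⊗[k] D) ⊗[k] S) (TensorProduct.assoc k R C S).symm.toLinearMap
    -- apply `τ_C` and `τ_D`
    ∘ₗ TensorProduct.map (lTensor R τC) (rTensor S τD)
    -- reassociate `(R⊗S)⊗((C⊗D)⊗(R⊗S))` into `(R⊗(S⊗C))⊗((D⊗R)⊗S)`
    ∘ₗ rTensor ((D ⊗[k] R) ⊗[k] S) (TensorProduct.assoc k R S C).toLinearMap
    ∘ₗ (TensorProduct.assoc k (R ⊗[k] S) C ((D ⊗[k] R) ⊗[k] S)).symm.toLinearMap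
    ∘ₗ lTensor (R ⊗[k] S) (lTensor C (TensorProduct.assoc k D R S).symm.toLinearMap)
    ∘ₗ lTensor (R ⊗[k] S) (TensorProduct.assoc k C D (R ⊗[k] S)).toLinearMap

end TwistingDefs

set_option maxHeartbeats 2000000 in
/-- compatible chain maps `ψ_R : C → C'` and `ψ_S : D → D'` of
bimodule resolutions of `R` and `S` induce a chain map
`ψ_R ⊗ ψ_S : C ⊗_τ D → C' ⊗_τ D'` of `(R ⊗_τ S)`-bimodule resolutions of
`R ⊗_τ S`: componentwise it commutes with both partial differentials of the
total complex, with the twisted bimodule action, and with the augmentations. -/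
theorem tensor_of_compatible_chain_maps
    (R S : Type) [Ring R] [Ring S] [Algebra k R] [Algebra k S]
    (τ : S ⊗[k] R →ₗ[k] R ⊗[k] S) (hτ : IsTwistingMap k R S τ)
    (C C' D D' : ℕ → ModuleCat k)
    (dC : ∀ n, ↥(C (n+1)) →ₗ[k] ↥(C n)) (dC' : ∀ n, ↥(C' (n+1)) →ₗ[k] ↥(C' n))
    (dD : ∀ n, ↥(D (n+1)) →ₗ[k] ↥(D n)) (dD' : ∀ n, ↥(D' (n+1)) →ₗ[k] ↥(D' n))
    (εC : ↥(C 0) →ₗ[k] R) (εC' : ↥(C' 0) →ₗ[k] R)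
    (εD : ↥(D 0) →ₗ[k] S) (εD' : ↥(D' 0) →ₗ[k] S)
    -- bimodule structures
    (ρC : ∀ n, (R ⊗[k] ↥(C n)) ⊗[k] R →ₗ[k] ↥(C n))
    (ρC' : ∀ n, (R ⊗[k] ↥(C' n)) ⊗[k] R →ₗ[k] ↥(C' n))
    (ρD : ∀ n, (S ⊗[k] ↥(D n)) ⊗[k] S →ₗ[k] ↥(D n))
    (ρD' : ∀ n, (S ⊗[k] ↥(D' n)) ⊗[k] S →ₗ[k] ↥(D' n))
    -- compatibility (twisting) maps of the resolutions
    (τC : ∀ n, S ⊗[k] ↥(C n) →ₗ[k] ↥(C n) ⊗[k] S)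
    (τC' : ∀ n, S ⊗[k] ↥(C' n) →ₗ[k] ↥(C' n) ⊗[k] S)
    (τD : ∀ n, ↥(D n) ⊗[k] R →ₗ[k] R ⊗[k] ↥(D n))
    (τD' : ∀ n, ↥(D' n) ⊗[k] R →ₗ[k] R ⊗[k] ↥(D' n))
    (hτCbij : ∀ n, Function.Bijective (τC n)) (hτC'bij : ∀ n, Function.Bijective (τC' n))
    (hτDbij : ∀ n, Function.Bijective (τD n)) (hτD'bij : ∀ n, Function.Bijective (τD' n))
    -- the chain maps
    (ψR : ∀ n, ↥(C n) →ₗ[k] ↥(C' n)) (ψS : ∀ n, ↥(D n) →ₗ[k] ↥(D' n))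
    (hψRchain : ∀ n, ψR n ∘ₗ dC n = dC' n ∘ₗ ψR (n+1))
    (hψSchain : ∀ n, ψS n ∘ₗ dD n = dD' n ∘ₗ ψS (n+1))
    (hψRlift : εC' ∘ₗ ψR 0 = εC) (hψSlift : εD' ∘ₗ ψS 0 = εD)
    -- the chain maps are bimodule homomorphisms
    (hψRbimod : ∀ n, ψR n ∘ₗ ρC n = ρC' n ∘ₗ rTensor R (lTensor R (ψR n)))
    (hψSbimod : ∀ n, ψS n ∘ₗ ρD n = ρD' n ∘ₗ rTensor S (lTensor S (ψS n)))
    -- the chain maps are compatible with the twisting maps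
    (hψRcompat : ∀ n, rTensor S (ψR n) ∘ₗ τC n = τC' n ∘ₗ lTensor S (ψR n))
    (hψScompat : ∀ n, lTensor R (ψS n) ∘ₗ τD n = τD' n ∘ₗ rTensor R (ψS n)) :
    -- conclusion: `ψR ⊗ ψS` is a chain map of `(R ⊗_τ S)`-bimodule resolutions
    (∀ i j, TensorProduct.map (ψR i) (ψS j) ∘ₗ rTensor ↥(D j) (dC i) =
        rTensor ↥(D' j) (dC' i) ∘ₗ TensorProduct.map (ψR (i+1)) (ψS j)) ∧
    (∀ i j, TensorProduct.map (ψR i) (ψS j) ∘ₗ lTensor ↥(C i) (dD j) =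
        lTensor ↥(C' i) (dD' j) ∘ₗ TensorProduct.map (ψR i) (ψS (j+1))) ∧
    (∀ i j, TensorProduct.map (ψR i) (ψS j)
          ∘ₗ twistAction k R S τ ↥(C i) ↥(D j) (ρC i) (ρD j) (τC i) (τD j) =
        twistAction k R S τ ↥(C' i) ↥(D' j) (ρC' i) (ρD' j) (τC' i) (τD' j)
          ∘ₗ lTensor (R ⊗[k] S) (rTensor (R ⊗[k] S) (TensorProduct.map (ψR i) (ψS j)))) ∧
    (TensorProduct.map εC' εD' ∘ₗ TensorProduct.map (ψR 0) (ψS 0) =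
      TensorProduct.map εC εD) := by
  obtain ⟨hbij, h1, h2, h3⟩ := hτ
  refine ⟨?_, ?_, ?_, ?_⟩
  · intro i j
    ext c d
    simp only [TensorProduct.AlgebraTensorModule.curry_apply, TensorProduct.curry_apply, LinearMap.coe_restrictScalars, LinearMap.coe_comp, Function.comp_apply, rTensor_tmul, lTensor_tmul, map_tmul]
    have := LinearMap.congr_fun (hψRchain i) c
    simp only [LinearMap.coe_comp, Function.comp_apply] at this
    rw [this]
  · intro i j
    ext c d
    simp only [TensorProduct.AlgebraTensorModule.curry_apply, TensorProduct.curry_apply, LinearMap.coe_restrictScalars, LinearMap.coe_comp, Function.comp_apply, rTensor_tmul, lTensor_tmul, map_tmul]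
    have := LinearMap.congr_fun (hψSchain j) d
    simp only [LinearMap.coe_comp, Function.comp_apply] at this
    rw [this]
  · intro i j
    ext r s c d r' s'
    unfold twistAction
    simp only [TensorProduct.AlgebraTensorModule.curry_apply, TensorProduct.curry_apply, LinearMap.coe_restrictScalars, LinearMap.coe_comp, Function.comp_apply, rTensor_tmul, lTensor_tmul, map_tmul, LinearEquiv.coe_coe, TensorProduct.assoc_tmul, TensorProduct.assoc_symm_tmul]
    have hc := LinearMap.congr_fun (hψRcompat i) (s ⊗ₜ[k] c)
    have hd := LinearMap.congr_fun (hψScompat j) (d ⊗ₜ[k] r')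
    simp only [LinearMap.coe_comp, Function.comp_apply, lTensor_tmul, rTensor_tmul] at hc hd
    rw [← hc, ← hd]
    induction τC i (s ⊗ₜ[k] c) using TensorProduct.induction_on with
    | zero => simp only [TensorProduct.tmul_zero, TensorProduct.zero_tmul, map_zero, LinearMap.map_zero, LinearEquiv.map_zero]
    | add x y hx hy => simp only [TensorProduct.tmul_add, TensorProduct.add_tmul, map_add, LinearMap.map_add, LinearEquiv.map_add, hx, hy]
    | tmul c1 s1 =>
      induction τD j (d ⊗ₜ[k] r') using TensorProduct.induction_on with
      | zero => simp only [TensorProduct.tmul_zero, TensorProduct.zero_tmul, map_zero, LinearMap.map_zero, LinearEquiv.map_zero]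
      | add x y hx hy => simp only [TensorProduct.tmul_add, TensorProduct.add_tmul, map_add, LinearMap.map_add, LinearEquiv.map_add, hx, hy]
      | tmul r2 d2 =>
        simp only [TensorProduct.AlgebraTensorModule.curry_apply, TensorProduct.curry_apply, LinearMap.coe_restrictScalars, LinearMap.coe_comp, Function.comp_apply, rTensor_tmul, lTensor_tmul, map_tmul, LinearEquiv.coe_coe, TensorProduct.assoc_tmul, TensorProduct.assoc_symm_tmul]
        induction τ (s1 ⊗ₜ[k] r2) using TensorProduct.induction_on with
        | zero => simp only [TensorProduct.tmul_zero, TensorProduct.zero_tmul, map_zero, LinearMap.map_zero, LinearEquiv.map_zero]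
        | add x y hx hy => simp only [TensorProduct.tmul_add, TensorProduct.add_tmul, map_add, LinearMap.map_add, LinearEquiv.map_add, hx, hy]
        | tmul r3 s3 =>
          simp only [TensorProduct.AlgebraTensorModule.curry_apply, TensorProduct.curry_apply, LinearMap.coe_restrictScalars, LinearMap.coe_comp, Function.comp_apply, rTensor_tmul, lTensor_tmul, map_tmul, LinearEquiv.coe_coe, TensorProduct.assoc_tmul, TensorProduct.assoc_symm_tmul]
          have hbc := LinearMap.congr_fun (hψRbimod i) ((r ⊗ₜ[k] c1) ⊗ₜ[k] r3)
          have hbd := LinearMap.congr_fun (hψSbimod j) ((s3 ⊗ₜ[k] d2) ⊗ₜ[k] s')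
          simp only [LinearMap.coe_comp, Function.comp_apply, rTensor_tmul, lTensor_tmul] at hbc hbd
          rw [hbc, hbd]
  · ext c d
    simp only [TensorProduct.AlgebraTensorModule.curry_apply, TensorProduct.curry_apply, LinearMap.coe_restrictScalars, LinearMap.coe_comp, Function.comp_apply, rTensor_tmul, lTensor_tmul, map_tmul]
    have h1 := LinearMap.congr_fun hψRlift c
    have h2 := LinearMap.congr_fun hψSlift d
    simp only [LinearMap.coe_comp, Function.comp_apply] at h1 h2
    rw [h1, h2]
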